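/- arXiv:math/0501109 — 2 statements merged into one kernel-verified Lean document; each statement's English description precedes it below -/
import Mathlib

section
/- Let w ∈ S_N with w ≥ (w∘ⁿ,w∘ᵐ) in the Bruhat order, and write the permutation matrix of w in block form w = [[w₁₁, w₁₂],[w₂₁, w₂₂]] with w₁₁ ∈ M_n(ℂ), w₁₂ ∈ M_{n,m}(ℂ), w₂₁ ∈ M_{m,n}(ℂ), w₂₂ ∈ M_m(ℂ). Then P_w ⊆ B_m⁺ w₂₁ B_n⁺ ∩ B_m⁻ (w∘ᵐ w₁₂ᵀ w∘ⁿ) B_n⁻. -/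
open Matrix

noncomputable section

abbrev Mat (k l : ℕ) := Matrix (Fin k) (Fin l) ℂ

/-- permutation matrix: (i,j) entry is 1 exactly when i = w j -/
def permMat (k : ℕ) (w : Equiv.Perm (Fin k)) : Mat k k :=
  fun i j => if i = w j then 1 else 0

/-- invertible upper triangular matrices -/
def Bp (k : ℕ) : Set (Mat k k) := {M | IsUnit M ∧ ∀ i j : Fin k, j < i → M i j = 0}

/-- invertible lower triangular matrices -/
def Bm (k : ℕ) : Set (Mat k k) := {M | IsUnit M ∧ ∀ i j : Fin k, i < j → M i j = 0}

def dcPlus {k l : ℕ} (w : Mat k l) : Set (Mat k l) :=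
  {x | ∃ b ∈ Bp k, ∃ b' ∈ Bp l, x = b * w * b'}

def dcMinus {k l : ℕ} (w : Mat k l) : Set (Mat k l) :=
  {x | ∃ b ∈ Bm k, ∃ b' ∈ Bm l, x = b * w * b'}

/-- comparison of finsets: sorted lists compare termwise -/
def finsetLE {k : ℕ} (A B : Finset (Fin k)) : Prop :=
  List.Forall₂ (· ≤ ·) (A.sort (· ≤ ·)) (B.sort (· ≤ ·))

/-- Bruhat order on S_k -/
def bruhatLE {k : ℕ} (y z : Equiv.Perm (Fin k)) : Prop :=
  ∀ p : Fin k, finsetLE ((Finset.Iic p).image y) ((Finset.Iic p).image z)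

/-- Zariski closure in the space of k×l matrices -/
def zClosure {k l : ℕ} (S : Set (Mat k l)) : Set (Mat k l) :=
  {x | ∀ p : MvPolynomial (Fin k × Fin l) ℂ,
      (∀ y ∈ S, MvPolynomial.eval (fun q => y q.1 q.2) p = 0) →
      MvPolynomial.eval (fun q => x q.1 q.2) p = 0}

def revP (k : ℕ) : Equiv.Perm (Fin k) := ⟨Fin.rev, Fin.rev, Fin.rev_rev, Fin.rev_rev⟩

def fe (m n : ℕ) : Fin n ⊕ Fin m ≃ Fin (m + n) :=
  finSumFinEquiv.trans (finCongr (Nat.add_comm n m))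

/-- the block matrix [[w∘ⁿ, 0],[x, w∘ᵐ]] -/
def embMat (m n : ℕ) (x : Mat m n) : Mat (m+n) (m+n) :=
  Matrix.reindex (fe m n) (fe m n)
    (Matrix.fromBlocks (permMat n (revP n)) 0 x (permMat m (revP m)))

/-- the permutation (w∘ⁿ,w∘ᵐ) ∈ S_{m+n} -/
def wnmPerm (m n : ℕ) : Equiv.Perm (Fin (m+n)) :=
  ((fe m n).symm.trans (Equiv.sumCongr (revP n) (revP m))).trans (fe m n)

def Pset (m n : ℕ) (w : Equiv.Perm (Fin (m+n))) : Set (Mat m n) :=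
  {x | embMat m n x ∈ dcPlus (permMat (m+n) w)}

/-- the matrix with t×t identity in upper-left corner, zeros elsewhere -/
def Imn (m n t : ℕ) : Mat m n := fun i j => if (i:ℕ) = (j:ℕ) ∧ (i:ℕ) < t then 1 else 0

/-- diagonal matrix with first t diagonal entries 0 and the rest 1 -/
def Jk (k t : ℕ) : Mat k k := fun i j => if (i:ℕ) = (j:ℕ) ∧ t ≤ (i:ℕ) then 1 else 0

noncomputable def subRank {k l : ℕ} (x : Mat k l) (R : Finset (Fin k)) (C : Finset (Fin l)) : ℕ :=
  (x.submatrix (fun i : {a // a ∈ R} => i.1) (fun j : {a // a ∈ C} => j.1)).rank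

/-- v(1) < ⋯ < v(t) -/
def headMono {k : ℕ} (t : ℕ) (v : Equiv.Perm (Fin k)) : Prop :=
  ∀ i j : Fin k, i < j → (j:ℕ) < t → v i < v j

/-- u(t+1) < ⋯ < u(k) -/
def tailMono {k : ℕ} (t : ℕ) (u : Equiv.Perm (Fin k)) : Prop :=
  ∀ i j : Fin k, i < j → t ≤ (i:ℕ) → u i < u j

def embPerm {k t : ℕ} (h : t ≤ k) (τ : Equiv.Perm (Fin t)) : Equiv.Perm (Fin k) :=
  τ.viaFintypeEmbedding (Fin.castLEEmb h)
def castTop {m n : ℕ} (i : Fin n) : Fin (m+n) := Fin.castLE (Nat.le_add_left n m) i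

def castBot {m n : ℕ} (i : Fin m) : Fin (m+n) := ⟨n + (i:ℕ), by have := i.isLt; omega⟩

/-- upper-right n×m block -/
def blk12 (m n : ℕ) (g : Mat (m+n) (m+n)) : Mat n m := g.submatrix castTop castBot
/-- lower-left m×n block -/
def blk21 (m n : ℕ) (g : Mat (m+n) (m+n)) : Mat m n := g.submatrix castBot castTop


/-!
If `b, b'` are upper triangular, the lower-left block of `b * g * b'` is
`b₂₂ * g₂₁ * b'₁₁`; applied to `[[w∘ⁿ, 0], [x, w∘ᵐ]] = b w b'` this gives `x ∈ B⁺ w₂₁ B⁺`.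
For the other coset invert: the inverse `[[w∘ⁿ, 0], [-w∘ᵐ x w∘ⁿ, w∘ᵐ]]` lies in
`B⁺ w⁻¹ B⁺ = B⁺ wᵀ B⁺`, whose lower-left block is `w₁₂ᵀ`, so `-w∘ᵐ x w∘ⁿ ∈ B⁺ w₁₂ᵀ B⁺`.
Conjugating by the longest elements turns `B⁺` into `B⁻`.
-/

section Permutation

variable {k : ℕ}

lemma permMat_eq_permMatrix (w : Equiv.Perm (Fin k)) : permMat k w = w⁻¹.permMatrix ℂ := by
  ext i j
  simp [permMat, PEquiv.toMatrix_apply, Equiv.toPEquiv_apply, Equiv.eq_symm_apply, eq_comm]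

lemma permMat_mul_transpose (w : Equiv.Perm (Fin k)) : permMat k w * (permMat k w)ᵀ = 1 := by
  rw [permMat_eq_permMatrix, transpose_permMatrix, ← permMatrix_mul, inv_inv, mul_inv_cancel,
    permMatrix_one]

lemma inv_permMat (w : Equiv.Perm (Fin k)) : (permMat k w)⁻¹ = (permMat k w)ᵀ :=
  inv_eq_right_inv (permMat_mul_transpose w)

lemma revP_inv : (revP k)⁻¹ = revP k := rfl

lemma permMat_revP_mul_self : permMat k (revP k) * permMat k (revP k) = 1 := by
  simpa only [permMat_eq_permMatrix, transpose_permMatrix, revP_inv] using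
    permMat_mul_transpose (revP k)

lemma permMat_revP_conj_conj {l : ℕ} (y : Mat k l) :
    permMat k (revP k) * (permMat k (revP k) * y * permMat l (revP l)) * permMat l (revP l) = y := by
  rw [← Matrix.mul_assoc, ← Matrix.mul_assoc, permMat_revP_mul_self, Matrix.one_mul,
    Matrix.mul_assoc, permMat_revP_mul_self, Matrix.mul_one]

lemma isUnit_permMat_revP : IsUnit (permMat k (revP k)) :=
  ⟨⟨_, _, permMat_revP_mul_self, permMat_revP_mul_self⟩, rfl⟩

lemma permMat_revP_conj (c : Mat k k) :
    permMat k (revP k) * c * permMat k (revP k) = c.submatrix Fin.rev Fin.rev := by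
  rw [permMat_eq_permMatrix, revP_inv, PEquiv.toMatrix_toPEquiv_mul, PEquiv.mul_toMatrix_toPEquiv]
  rfl

end Permutation

section Triangular

variable {k l : ℕ}

lemma isUnit_iff_diag_ne_zero_of_upper {b : Mat k k} (hb : b.IsUpperTriangular) :
    IsUnit b ↔ ∀ i, b i i ≠ 0 := by
  rw [isUnit_iff_isUnit_det, det_of_isUpperTriangular hb, isUnit_iff_ne_zero,
    Finset.prod_ne_zero_iff]
  simp

lemma submatrix_mem_Bp {b : Mat k k} (hb : b ∈ Bp k) {f : Fin l → Fin k} (hf : StrictMono f) :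
    b.submatrix f f ∈ Bp l := by
  have htri : (b.submatrix f f).IsUpperTriangular := fun i j hij => hb.2 _ _ (hf hij)
  refine ⟨(isUnit_iff_diag_ne_zero_of_upper htri).2 fun i => ?_, htri⟩
  exact (isUnit_iff_diag_ne_zero_of_upper hb.2).1 hb.1 (f i)

lemma inv_mem_Bp {b : Mat k k} (hb : b ∈ Bp k) : b⁻¹ ∈ Bp k := by
  have := hb.1.invertible
  exact ⟨isUnit_nonsing_inv_iff.2 hb.1, blockTriangular_inv_of_blockTriangular hb.2⟩

lemma revP_conj_mem_Bm {c : Mat k k} (hc : c ∈ Bp k) :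
    permMat k (revP k) * c * permMat k (revP k) ∈ Bm k := by
  refine ⟨(isUnit_permMat_revP.mul hc.1).mul isUnit_permMat_revP, fun i j hij => ?_⟩
  rw [permMat_revP_conj]
  exact hc.2 _ _ (Fin.rev_lt_rev.2 hij)

lemma neg_mem_Bm {c : Mat k k} (hc : c ∈ Bm k) : -c ∈ Bm k :=
  ⟨hc.1.neg, fun i j hij => by simp [hc.2 i j hij]⟩

end Triangular

section Blocks

variable {m n : ℕ}

def blk11 (m n : ℕ) (g : Mat (m+n) (m+n)) : Mat n n := g.submatrix castTop castTop

def blk22 (m n : ℕ) (g : Mat (m+n) (m+n)) : Mat m m := g.submatrix castBot castBot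

lemma fe_inl (i : Fin n) : fe m n (Sum.inl i) = castTop i := by
  ext; simp [fe, castTop]

lemma fe_inr (j : Fin m) : fe m n (Sum.inr j) = castBot j := by
  ext; simp [fe, castBot]; omega

lemma strictMono_castTop : StrictMono (castTop (m := m) (n := n)) :=
  Fin.strictMono_castLE (Nat.le_add_left n m)

lemma strictMono_castBot : StrictMono (castBot (m := m) (n := n)) := fun i j hij => by
  simp only [castBot, Fin.lt_def] at hij ⊢; omega

lemma castTop_lt_castBot (i : Fin n) (j : Fin m) : castTop (m := m) i < castBot j := by
  simp only [castTop, castBot, Fin.lt_def, Fin.val_castLE]; omega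

lemma sum_eq_sum_castTop_add_sum_castBot {α : Type*} [AddCommMonoid α] (f : Fin (m+n) → α) :
    ∑ k, f k = ∑ i : Fin n, f (castTop i) + ∑ j : Fin m, f (castBot j) := by
  rw [← (fe m n).sum_comp, Fintype.sum_sum_type]
  simp only [fe_inl, fe_inr]

lemma blk21_upper_mul {b : Mat (m+n) (m+n)} (hb : b.IsUpperTriangular) (g : Mat (m+n) (m+n)) :
    blk21 m n (b * g) = blk22 m n b * blk21 m n g := by
  ext i j
  have hzero (k : Fin n) : b (castBot i) (castTop k) = 0 := hb (castTop_lt_castBot k i)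
  simp [blk21, blk22, mul_apply, sum_eq_sum_castTop_add_sum_castBot, hzero]

lemma blk21_mul_upper (g : Mat (m+n) (m+n)) {b : Mat (m+n) (m+n)} (hb : b.IsUpperTriangular) :
    blk21 m n (g * b) = blk21 m n g * blk11 m n b := by
  ext i j
  have hzero (k : Fin m) : b (castBot k) (castTop j) = 0 := hb (castTop_lt_castBot j k)
  simp [blk21, blk11, mul_apply, sum_eq_sum_castTop_add_sum_castBot, hzero]

lemma blk21_transpose (g : Mat (m+n) (m+n)) : blk21 m n gᵀ = (blk12 m n g)ᵀ := rfl

lemma blk21_embMat (x : Mat m n) : blk21 m n (embMat m n x) = x := by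
  ext i j
  simp [blk21, embMat, ← fe_inl, ← fe_inr]

lemma embMat_mul_embMat_neg (x : Mat m n) :
    embMat m n x * embMat m n (-(permMat m (revP m) * x * permMat n (revP n))) = 1 := by
  have hblock : x * permMat n (revP n) +
      permMat m (revP m) * -(permMat m (revP m) * x * permMat n (revP n)) = 0 := by
    rw [Matrix.mul_neg, ← Matrix.mul_assoc, ← Matrix.mul_assoc, permMat_revP_mul_self,
      Matrix.one_mul, add_neg_cancel]
  rw [embMat, embMat, ← coe_reindexAlgEquiv ℂ ℂ, ← map_mul, fromBlocks_multiply, hblock]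
  simp [permMat_revP_mul_self]

lemma inv_embMat (x : Mat m n) :
    (embMat m n x)⁻¹ = embMat m n (-(permMat m (revP m) * x * permMat n (revP n))) :=
  inv_eq_right_inv (embMat_mul_embMat_neg x)

end Blocks

section DoubleCosets

variable {m n : ℕ}

lemma blk21_mem_dcPlus {g W : Mat (m+n) (m+n)} (hg : g ∈ dcPlus W) :
    blk21 m n g ∈ dcPlus (blk21 m n W) := by
  obtain ⟨b, hb, b', hb', rfl⟩ := hg
  refine ⟨blk22 m n b, submatrix_mem_Bp hb strictMono_castBot,
    blk11 m n b', submatrix_mem_Bp hb' strictMono_castTop, ?_⟩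
  rw [blk21_mul_upper _ hb'.2, blk21_upper_mul hb.2]

lemma inv_mem_dcPlus_transpose {k : ℕ} {g : Mat k k} {w : Equiv.Perm (Fin k)}
    (hg : g ∈ dcPlus (permMat k w)) : g⁻¹ ∈ dcPlus (permMat k w)ᵀ := by
  obtain ⟨b, hb, b', hb', rfl⟩ := hg
  refine ⟨b'⁻¹, inv_mem_Bp hb', b⁻¹, inv_mem_Bp hb, ?_⟩
  rw [Matrix.mul_inv_rev, Matrix.mul_inv_rev, inv_permMat, Matrix.mul_assoc]

lemma revP_conj_mem_dcMinus {y z : Mat m n} (hy : y ∈ dcPlus z) :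
    permMat m (revP m) * y * permMat n (revP n) ∈
      dcMinus (permMat m (revP m) * z * permMat n (revP n)) := by
  obtain ⟨b, hb, b', hb', rfl⟩ := hy
  refine ⟨_, revP_conj_mem_Bm hb, _, revP_conj_mem_Bm hb', ?_⟩
  simp only [Matrix.mul_assoc]
  rw [← Matrix.mul_assoc (permMat m _) (permMat m _), permMat_revP_mul_self, Matrix.one_mul,
    ← Matrix.mul_assoc (permMat n _) (permMat n _), permMat_revP_mul_self, Matrix.one_mul]

lemma neg_mem_dcMinus {y z : Mat m n} (hy : y ∈ dcMinus z) : -y ∈ dcMinus z := by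
  obtain ⟨b, hb, b', hb', rfl⟩ := hy
  exact ⟨-b, neg_mem_Bm hb, b', hb', by rw [Matrix.neg_mul, Matrix.neg_mul]⟩

end DoubleCosets

theorem statement8_general (m n : ℕ)
    (w : Equiv.Perm (Fin (m+n)))
    (w12 : Mat n m) (h12 : w12 = blk12 m n (permMat (m+n) w))
    (w21 : Mat m n) (h21 : w21 = blk21 m n (permMat (m+n) w)) :
    Pset m n w ⊆
      dcPlus w21 ∩ dcMinus (permMat m (revP m) * w12.transpose * permMat n (revP n)) := by
  intro x hx
  have hplus := blk21_mem_dcPlus hx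
  rw [blk21_embMat, ← h21] at hplus
  have hinv := blk21_mem_dcPlus (inv_mem_dcPlus_transpose hx)
  rw [inv_embMat, blk21_embMat, blk21_transpose, ← h12] at hinv
  have hminus := neg_mem_dcMinus (revP_conj_mem_dcMinus hinv)
  refine ⟨hplus, ?_⟩
  rwa [Matrix.mul_neg, Matrix.neg_mul, neg_neg, permMat_revP_conj_conj] at hminus

theorem statement8 (m n : ℕ) (hm : 0 < m) (hn : 0 < n)
    (w : Equiv.Perm (Fin (m+n))) (hw : bruhatLE (wnmPerm m n) w)
    (w12 : Mat n m) (h12 : w12 = blk12 m n (permMat (m+n) w))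
    (w21 : Mat m n) (h21 : w21 = blk21 m n (permMat (m+n) w)) :
    Pset m n w ⊆
      dcPlus w21 ∩ dcMinus (permMat m (revP m) * w12.transpose * permMat n (revP n)) :=
  statement8_general m n w w12 h12 w21 h21
end
end

section
/- Let n be a positive integer, 0 ≤ t ≤ n, and u, v ∈ S_n. (a) If u(t+1) < ⋯ < u(n) and v ≤ u in the Bruhat order, then v(j) ≥ u(j) for all j = t+1,…,n. (b) If v(1) < ⋯ < v(t) and v(j) ≥ u(j) for all j = t+1,…,n, then v ≤ u in the Bruhat order. -/
open Matrix

noncomputable section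

/-!
Both parts are read off the rank-function description of the Bruhat order: `v ≤ u` iff for all
`m` and `c`, among the first `m` positions `u` takes at most as many values `≤ c` as `v` does, or
equivalently (the counts over all positions are both `c + 1`), among the positions `≥ m` `v` takes
at most as many values `≤ c` as `u` does.

(a) Take `m = j` and `c = v j`: position `j` counts for `v`, while no position `≥ j` counts for `u`
if `u` increases from `j` on and `u j > v j`.

(b) For `m ≥ t` the tail counts compare position by position. For `m < t`, since `v` increases on
the first `t` positions, its count over the first `m` positions is either `m` or its count over the
first `t`, and both dominate the count of `u`.
-/

open Finset

namespace Monotone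

variable {α : Type*} [LinearOrder α] {k : ℕ} {f g : Fin k → α}

theorem apply_le_iff_lt_card_filter (hf : Monotone f) (i : Fin k) (c : α) :
    f i ≤ c ↔ (i : ℕ) < #{j | f j ≤ c} := by
  constructor
  · intro hic
    have hsub : Iic i ⊆ ({j | f j ≤ c} : Finset (Fin k)) := fun j hj =>
      mem_filter.mpr ⟨mem_univ j, (hf (mem_Iic.mp hj)).trans hic⟩
    simpa using card_le_card hsub
  · intro hlt
    by_contra! hci
    have hsub : ({j | f j ≤ c} : Finset (Fin k)) ⊆ Iio i := fun j hj => by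
      by_contra! hij
      exact (hci.trans_le (hf (not_lt.mp (by simpa using hij)))).not_ge (mem_filter.mp hj).2
    simpa using (card_le_card hsub).trans_lt' hlt

theorem forall_le_iff_card_filter_le (hf : Monotone f) (hg : Monotone g) :
    (∀ i, f i ≤ g i) ↔ ∀ c, #{j | g j ≤ c} ≤ #{j | f j ≤ c} := by
  refine ⟨fun h c => card_le_card (monotone_filter_right _ fun j _ => (h j).trans), ?_⟩
  intro h i
  rw [hf.apply_le_iff_lt_card_filter]
  exact ((hg.apply_le_iff_lt_card_filter i (g i)).mp le_rfl).trans_le (h (g i))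

end Monotone

theorem Finset.card_filter_orderEmbOfFin {α : Type*} [LinearOrder α] (s : Finset α) {k : ℕ}
    (h : #s = k) (p : α → Prop) [DecidablePred p] :
    #{j | p (s.orderEmbOfFin h j)} = #(s.filter p) := by
  conv_rhs => rw [← s.map_orderEmbOfFin_univ h, filter_map, card_map]
  rfl

theorem finsetLE_iff_card_filter_le {k : ℕ} {A B : Finset (Fin k)} (hcard : #A = #B) :
    finsetLE A B ↔ ∀ c, #(B.filter (· ≤ c)) ≤ #(A.filter (· ≤ c)) := by
  simp only [← B.card_filter_orderEmbOfFin rfl, ← A.card_filter_orderEmbOfFin hcard]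
  rw [← Monotone.forall_le_iff_card_filter_le (A.orderEmbOfFin hcard).monotone
    (B.orderEmbOfFin rfl).monotone, finsetLE, List.forall₂_iff_get]
  simp [Finset.orderEmbOfFin_apply, hcard, Fin.forall_iff]

section Rank

variable {n : ℕ}

def prefixRank (w : Equiv.Perm (Fin n)) (m : ℕ) (c : Fin n) : ℕ :=
  #{i : Fin n | (i : ℕ) < m ∧ w i ≤ c}

def suffixRank (w : Equiv.Perm (Fin n)) (m : ℕ) (c : Fin n) : ℕ :=
  #{i : Fin n | m ≤ (i : ℕ) ∧ w i ≤ c}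

theorem prefixRank_add_suffixRank (w : Equiv.Perm (Fin n)) (m : ℕ) (c : Fin n) :
    prefixRank w m c + suffixRank w m c = c + 1 := by
  have hpre : #{i | w i ≤ c} = (c : ℕ) + 1 := by
    rw [← card_map w.toEmbedding, ← Fin.card_Iic]
    congr 1
    ext x
    simp
  rw [← hpre, ← card_filter_add_card_filter_not (fun i : Fin n => (i : ℕ) < m),
    filter_filter, filter_filter, prefixRank, suffixRank]
  simp only [not_lt, and_comm]

theorem prefixRank_mono (w : Equiv.Perm (Fin n)) (c : Fin n) :
    Monotone fun m => prefixRank w m c :=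
  fun _ _ hm => card_le_card (monotone_filter_right _ fun _ _ hi => ⟨hi.1.trans_le hm, hi.2⟩)

theorem card_filter_image_Iic (w : Equiv.Perm (Fin n)) (p c : Fin n) :
    #(((Iic p).image w).filter (· ≤ c)) = prefixRank w (p + 1) c := by
  rw [filter_image, card_image_of_injective _ w.injective, prefixRank]
  congr 1
  ext i
  simp only [mem_filter, mem_Iic, mem_univ, true_and, Fin.le_def, Nat.lt_succ_iff]

theorem bruhatLE_iff_prefixRank_le (y z : Equiv.Perm (Fin n)) :
    bruhatLE y z ↔ ∀ m c, prefixRank z m c ≤ prefixRank y m c := by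
  have hcard (w : Equiv.Perm (Fin n)) (p : Fin n) : #((Iic p).image w) = #(Iic p) :=
    card_image_of_injective _ w.injective
  simp only [bruhatLE, finsetLE_iff_card_filter_le ((hcard y _).trans (hcard z _).symm),
    card_filter_image_Iic]
  refine ⟨fun h m c => ?_, fun h p c => h _ c⟩
  rcases Nat.eq_zero_or_pos (min m n) with hm | hm
  · simp [prefixRank, show m = 0 by have := c.pos; omega]
  have hcut (w : Equiv.Perm (Fin n)) : prefixRank w m c = prefixRank w (min m n - 1 + 1) c := by
    simp only [prefixRank]
    congr 1
    ext i
    simp only [mem_filter, mem_univ, true_and]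
    omega
  rw [hcut, hcut]
  exact h ⟨min m n - 1, by omega⟩ c

theorem bruhatLE_iff_suffixRank_le (y z : Equiv.Perm (Fin n)) :
    bruhatLE y z ↔ ∀ m c, suffixRank y m c ≤ suffixRank z m c := by
  rw [bruhatLE_iff_prefixRank_le]
  refine forall₂_congr fun m c => ?_
  have := prefixRank_add_suffixRank y m c
  have := prefixRank_add_suffixRank z m c
  omega

variable {t : ℕ} {u v : Equiv.Perm (Fin n)}

theorem apply_le_apply_of_bruhatLE_of_tailMono (hu : tailMono t u) (h : bruhatLE v u) {j : Fin n}
    (hj : t ≤ (j : ℕ)) : u j ≤ v j := by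
  by_contra! hlt
  have hv_pos : 0 < suffixRank v j (v j) := card_pos.mpr ⟨j, by simp⟩
  have hu_zero : suffixRank u j (v j) = 0 := by
    refine card_eq_zero.mpr (filter_eq_empty_iff.mpr fun i _ ⟨hji, hui⟩ => ?_)
    rcases (Fin.le_def.mpr hji).eq_or_lt with rfl | hji
    · exact hlt.not_ge hui
    · exact (hlt.trans (hu j i hji hj)).not_ge hui
  have := (bruhatLE_iff_suffixRank_le v u).mp h j (v j)
  omega

theorem bruhatLE_of_headMono (hv : headMono t v) (h : ∀ j : Fin n, t ≤ (j : ℕ) → u j ≤ v j) :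
    bruhatLE v u := by
  have htail {m : ℕ} (hm : t ≤ m) (c : Fin n) : prefixRank u m c ≤ prefixRank v m c := by
    have hsuf : suffixRank v m c ≤ suffixRank u m c :=
      card_le_card (monotone_filter_right _ fun i _ hi => ⟨hi.1, (h i (hm.trans hi.1)).trans hi.2⟩)
    have := prefixRank_add_suffixRank u m c
    have := prefixRank_add_suffixRank v m c
    omega
  rw [bruhatLE_iff_prefixRank_le]
  intro m c
  rcases le_total t m with htm | hmt
  · exact htail htm c
  by_cases hall : ∀ i : Fin n, (i : ℕ) < m → v i ≤ c
  · exact card_le_card (monotone_filter_right _ fun i _ hi => ⟨hi.1, hall i hi.1⟩)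
  push Not at hall
  obtain ⟨i₀, hi₀m, hci₀⟩ := hall
  -- `v` increases on the first `t` positions, so past `i₀` it stays above `c`
  have hcut : prefixRank v m c = prefixRank v t c := by
    simp only [prefixRank]
    congr 1
    ext i
    simp only [mem_filter, mem_univ, true_and]
    refine ⟨fun hi => ⟨hi.1.trans_le hmt, hi.2⟩, fun ⟨hit, hic⟩ => ⟨?_, hic⟩⟩
    by_contra! hmi
    exact (hci₀.trans (hv i₀ i (by rw [Fin.lt_def]; omega) hit)).not_ge hic
  calc prefixRank u m c ≤ prefixRank u t c := prefixRank_mono u c hmt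
    _ ≤ prefixRank v t c := htail le_rfl c
    _ = prefixRank v m c := hcut.symm

end Rank

theorem statement11_general (n t : ℕ) (u v : Equiv.Perm (Fin n)) :
    -- (a)
    (tailMono t u → bruhatLE v u → ∀ j : Fin n, t ≤ (j:ℕ) → u j ≤ v j) ∧
    -- (b)
    (headMono t v → (∀ j : Fin n, t ≤ (j:ℕ) → u j ≤ v j) → bruhatLE v u) :=
  ⟨fun hu h _ hj => apply_le_apply_of_bruhatLE_of_tailMono hu h hj, bruhatLE_of_headMono⟩

theorem statement11 (n t : ℕ) (hn : 0 < n) (ht : t ≤ n) (u v : Equiv.Perm (Fin n)) :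
    -- (a)
    (tailMono t u → bruhatLE v u → ∀ j : Fin n, t ≤ (j:ℕ) → u j ≤ v j) ∧
    -- (b)
    (headMono t v → (∀ j : Fin n, t ≤ (j:ℕ) → u j ≤ v j) → bruhatLE v u) :=
  statement11_general n t u v
end
end
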